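/- Let V be a vector space of dimension r over a field K and suppose given 2r vectors p_{i,j} ∈ V (i ∈ {1,…,r}, j ∈ {+,-}) spanning V. If there is no subset I ⊆ {1,…,r} with 1 ≤ |I| = k ≤ r and dim span{p_{i,j} : i ∈ I, j ∈ {+,-}} < k, then there exists a choice function σ : {1,…,r} → {+,-} such that the matrix whose columns are p_{1,σ(1)},…,p_{r,σ(r)} (in any fixed basis of V) has nonzero determinant. -/

import Mathlib

/-!
The hypothesis is Rado's condition for the family of pairs `X i = {p i true, p i false}` in the
linear matroid of `V`, and a sign choice with nonzero determinant is an independent transversal.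
Rado's theorem is proved by shrinking the sets: if `|X i| ≥ 2`, some element of `X i` can be
dropped without breaking the condition. Otherwise dropping `x` breaks it on some `I ∋ i` and
dropping `y ≠ x` on some `J ∋ i`. Writing `X(I)` for `⋃ k ∈ I, X k`, the two offending unions
contain `X(I ∪ J)` in their union and `X((I ∩ J) \ {i})` in their intersection, so submodularity
of the rank gives `|I ∪ J| + |I ∩ J| - 1 ≤ |I| + |J| - 2`. Once all sets are singletons, the
condition for the whole index set says the chosen vectors are independent.
-/

open Finset Module Submodule Function

section Rado

variable {K V ι : Type*} [DivisionRing K] [AddCommGroup V] [Module K V] [DecidableEq V]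

theorem finrank_span_union_add_finrank_span_inter_le (s t : Finset V) :
    finrank K (span K (↑(s ∪ t) : Set V)) + finrank K (span K (↑(s ∩ t) : Set V)) ≤
      finrank K (span K (s : Set V)) + finrank K (span K (t : Set V)) := by
  have hinter : span K (↑(s ∩ t) : Set V) ≤ span K s ⊓ span K t :=
    le_inf (span_mono (by simp)) (span_mono (by simp))
  rw [coe_union, span_union, ← finrank_sup_add_finrank_inf_eq (span K (s : Set V))]
  exact Nat.add_le_add_left (Submodule.finrank_mono hinter) _

variable (K) in
def RadoCondition (X : ι → Finset V) : Prop :=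
  ∀ I : Finset ι, #I ≤ finrank K (span K (I.biUnion X : Set V))

theorem RadoCondition.nonempty {X : ι → Finset V} (hX : RadoCondition K X) (i : ι) :
    (X i).Nonempty := by
  by_contra h
  simpa [not_nonempty_iff_eq_empty.mp h] using hX {i}

theorem RadoCondition.exists_mem_of_not_update [DecidableEq ι] {X : ι → Finset V}
    (hX : RadoCondition K X) {i : ι} {s : Finset V} (h : ¬RadoCondition K (update X i s)) :
    ∃ I, i ∈ I ∧ finrank K (span K (I.biUnion (update X i s) : Set V)) < #I := by
  obtain ⟨I, hI⟩ := not_forall.mp h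
  refine ⟨I, ?_, not_le.mp hI⟩
  by_contra hiI
  have hsame : I.biUnion (update X i s) = I.biUnion X :=
    biUnion_congr rfl fun k hk => update_of_ne (ne_of_mem_of_not_mem hk hiI) _ _
  exact hI (hsame ▸ hX I)

theorem RadoCondition.exists_erase [DecidableEq ι] {X : ι → Finset V} (hX : RadoCondition K X)
    {i : ι} (hi : 1 < #(X i)) : ∃ z ∈ X i, RadoCondition K (update X i ((X i).erase z)) := by
  obtain ⟨x, hx, y, hy, hxy⟩ := one_lt_card.mp hi
  by_contra! h
  obtain ⟨I, hiI, hI⟩ := hX.exists_mem_of_not_update (h x hx)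
  obtain ⟨J, hiJ, hJ⟩ := hX.exists_mem_of_not_update (h y hy)
  set A := I.biUnion (update X i ((X i).erase x))
  set B := J.biUnion (update X i ((X i).erase y))
  have hunion : (I ∪ J).biUnion X ⊆ A ∪ B := by
    intro v hv
    obtain ⟨k, hk, hvk⟩ := mem_biUnion.mp hv
    rcases eq_or_ne k i with rfl | hki
    · by_cases hvx : v = x
      · subst hvx
        exact mem_union_right _ (mem_biUnion.mpr ⟨k, hiJ, by simp [hxy, hvk]⟩)
      · exact mem_union_left _ (mem_biUnion.mpr ⟨k, hiI, by simp [hvx, hvk]⟩)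
    · rcases mem_union.mp hk with hk | hk
      · exact mem_union_left _ (mem_biUnion.mpr ⟨k, hk, by simpa [hki] using hvk⟩)
      · exact mem_union_right _ (mem_biUnion.mpr ⟨k, hk, by simpa [hki] using hvk⟩)
  have hinter : ((I ∩ J).erase i).biUnion X ⊆ A ∩ B := by
    intro v hv
    obtain ⟨k, hk, hvk⟩ := mem_biUnion.mp hv
    obtain ⟨hki, hkI, hkJ⟩ := by simpa only [mem_erase, mem_inter] using hk
    exact mem_inter.mpr ⟨mem_biUnion.mpr ⟨k, hkI, by simpa [hki] using hvk⟩,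
      mem_biUnion.mpr ⟨k, hkJ, by simpa [hki] using hvk⟩⟩
  have hcard : #(I ∪ J) + #((I ∩ J).erase i) + 1 = #I + #J := by
    have hiIJ : i ∈ I ∩ J := mem_inter.mpr ⟨hiI, hiJ⟩
    rw [card_erase_of_mem hiIJ, ← card_union_add_card_inter I J]
    have := card_pos.mpr ⟨i, hiIJ⟩
    omega
  have hsubmod := finrank_span_union_add_finrank_span_inter_le (K := K) A B
  have hU := (hX (I ∪ J)).trans (finrank_mono (span_mono (coe_subset.mpr hunion)))
  have hV := (hX _).trans (finrank_mono (span_mono (coe_subset.mpr hinter)))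
  omega

theorem RadoCondition.exists_linearIndependent [Finite ι] {X : ι → Finset V}
    (hX : RadoCondition K X) : ∃ f : ι → V, (∀ i, f i ∈ X i) ∧ LinearIndependent K f := by
  classical
  have := Fintype.ofFinite ι
  induction hn : ∑ i, #(X i) using Nat.strong_induction_on generalizing X with
  | _ n ih =>
  by_cases hbig : ∃ i, 1 < #(X i)
  · obtain ⟨i, hi⟩ := hbig
    obtain ⟨z, hz, hXz⟩ := hX.exists_erase hi
    have hsub : ∀ j, update X i ((X i).erase z) j ⊆ X j := by
      intro j
      rcases eq_or_ne j i with rfl | hj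
      · simpa using erase_subset z (X j)
      · simp [hj]
    have hlt : ∑ j, #(update X i ((X i).erase z) j) < n :=
      hn ▸ sum_lt_sum (fun j _ => card_le_card (hsub j))
        ⟨i, mem_univ i, by simpa using card_erase_lt_of_mem hz⟩
    obtain ⟨f, hf, hli⟩ := ih _ hlt hXz rfl
    exact ⟨f, fun j => hsub j (hf j), hli⟩
  · push Not at hbig
    choose f hf using fun i => card_eq_one.mp (le_antisymm (hbig i) (hX.nonempty i).card_pos)
    refine ⟨f, by simp [hf], ?_⟩
    have hrange : (↑(univ.biUnion X) : Set V) = Set.range f := by ext; simp [hf, eq_comm]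
    rw [linearIndependent_iff_card_eq_finrank_span]
    refine le_antisymm ?_ (finrank_range_le_card f)
    have h := hX univ
    rwa [card_univ, hrange] at h

end Rado

theorem Module.Basis.det_toMatrix_ne_zero_of_linearIndependent {K V ι : Type*} [Field K]
    [AddCommGroup V] [Module K V] [Fintype ι] [DecidableEq ι] (b : Basis ι K V) {v : ι → V}
    (hv : LinearIndependent K v) : (b.toMatrix v).det ≠ 0 := by
  have hcols : LinearIndependent K (b.toMatrix v).col :=
    hv.map' b.equivFun.toLinearMap b.equivFun.ker
  exact ((Matrix.isUnit_iff_isUnit_det _).mp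
    (Matrix.linearIndependent_cols_iff_isUnit.mp hcols)).ne_zero

theorem stmt8_general {K V : Type*} [Field K] [AddCommGroup V] [Module K V]
    (r : ℕ)
    (b : Module.Basis (Fin r) K V)
    (p : Fin r → Bool → V)
    (hnodeg : ¬ ∃ I : Finset (Fin r), 1 ≤ I.card ∧ I.card ≤ r ∧
      Module.finrank K
        (Submodule.span K {v : V | ∃ i ∈ I, ∃ j : Bool, p i j = v}) < I.card) :
    ∃ σ : Fin r → Bool,
      (Matrix.of fun k i : Fin r => b.repr (p i (σ i)) k).det ≠ 0 := by
  classical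
  have hRado : RadoCondition K fun i => univ.image (p i) := by
    intro I
    have hset : (↑(I.biUnion fun i => univ.image (p i)) : Set V) =
        {v | ∃ i ∈ I, ∃ j, p i j = v} := by
      ext; simp [eq_comm, or_comm]
    rcases I.eq_empty_or_nonempty with rfl | hI
    · simp
    · rw [hset]
      have hIr : #I ≤ r := (card_le_univ I).trans_eq (Fintype.card_fin r)
      exact not_lt.mp fun h => hnodeg ⟨I, hI.card_pos, hIr, h⟩
  obtain ⟨f, hf, hli⟩ := hRado.exists_linearIndependent
  choose σ hσ using fun i => mem_image.mp (hf i)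
  obtain rfl : (fun i => p i (σ i)) = f := funext fun i => (hσ i).2
  exact ⟨σ, b.det_toMatrix_ne_zero_of_linearIndependent hli⟩

/-- Determinantal reformulation of Theorem A.1: if no subset `I` with
`1 ≤ |I| ≤ r` has the span of its `2|I|` vectors of dimension `< |I|`, then
some sign choice `σ` gives a transversal family whose coordinate matrix (in
any fixed basis of `V`) has nonzero determinant. -/
theorem stmt8 {K V : Type*} [Field K] [AddCommGroup V] [Module K V]
    [FiniteDimensional K V]
    (r : ℕ) (hr : 1 ≤ r) (hdim : Module.finrank K V = r)
    (b : Module.Basis (Fin r) K V)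
    (p : Fin r → Bool → V)
    (hspan : Submodule.span K (Set.range fun x : Fin r × Bool => p x.1 x.2) = ⊤)
    (hnodeg : ¬ ∃ I : Finset (Fin r), 1 ≤ I.card ∧ I.card ≤ r ∧
      Module.finrank K
        (Submodule.span K {v : V | ∃ i ∈ I, ∃ j : Bool, p i j = v}) < I.card) :
    ∃ σ : Fin r → Bool,
      (Matrix.of fun k i : Fin r => b.repr (p i (σ i)) k).det ≠ 0 :=
  stmt8_general r b p hnodeg
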